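/- Let E : ℝⁿ → ℝ be twice continuously differentiable with gradient g and Hessian H, and let U ⊆ ℝⁿ be an open set. Then U is a corridor for E if and only if H(θ) g(θ) = 0 for every θ ∈ U. -/

import Mathlib

/-!
Write `F = -∇E`, so that gradient-flow lines are the integral curves of `F`, and
`DF(θ) F(θ) = H(θ) g(θ)`. Along an integral curve `θ`, the chain rule gives
`(F ∘ θ)' = DF(θ) F(θ)`. If this vanishes on `U`, then `F` is constant along every integral curve
in `U`, so `θ' = F(θ)` is constant and `θ` is a line. Conversely, at any `θ₀ ∈ U` the
Picard–Lindelöf theorem provides an integral curve through `θ₀` which stays in `U` for a short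
time; in a corridor it is a line, so `F ∘ θ = θ'` is locally constant and `DF(θ₀) F(θ₀) = 0`.
-/

/-- An open set `U ⊆ ℝⁿ` is a *corridor* for `E` if every solution of the gradient flow
`θ'(t) = -∇E(θ(t))` whose image lies in `U` is a straight line traveled at constant speed,
i.e. satisfies `θ(t) = θ(a) + (t - a) • v` for some fixed vector `v`. -/
def IsCorridor {n : ℕ} (E : EuclideanSpace ℝ (Fin n) → ℝ)
    (U : Set (EuclideanSpace ℝ (Fin n))) : Prop :=
  ∀ (a b : ℝ), a ≤ b → ∀ θ : ℝ → EuclideanSpace ℝ (Fin n),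
    (∀ t ∈ Set.Icc a b, HasDerivAt θ (-(gradient E (θ t))) t) →
    (∀ t ∈ Set.Icc a b, θ t ∈ U) →
    ∃ v : EuclideanSpace ℝ (Fin n), ∀ t ∈ Set.Icc a b, θ t = θ a + (t - a) • v

open Set Filter Topology

theorem ContDiff.gradient {X : Type*} [NormedAddCommGroup X] [InnerProductSpace ℝ X]
    [CompleteSpace X] {f : X → ℝ} {m n : WithTop ℕ∞} (hf : ContDiff ℝ n f) (hmn : m + 1 ≤ n) :
    ContDiff ℝ m (gradient f) :=
  (InnerProductSpace.toDual ℝ X).symm.contDiff.comp (hf.fderiv_right hmn)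

section IntegralCurve

variable {V W : Type*} [NormedAddCommGroup V] [NormedSpace ℝ V]
  [NormedAddCommGroup W] [NormedSpace ℝ W]

theorem hasDerivAt_const_add_sub_smul (x v : V) (a t : ℝ) :
    HasDerivAt (fun s => x + (s - a) • v) v t := by
  simpa using ((hasDerivAt_id t).sub_const a).smul_const v |>.const_add x

theorem eq_add_sub_smul_of_forall_hasDerivAt {θ : ℝ → V} {v : V} {a b : ℝ}
    (hθ : ∀ t ∈ Icc a b, HasDerivAt θ v t) : ∀ t ∈ Icc a b, θ t = θ a + (t - a) • v :=
  eq_of_has_deriv_right_eq (fun t ht => (hθ t (Ico_subset_Icc_self ht)).hasDerivWithinAt)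
    (fun t _ => (hasDerivAt_const_add_sub_smul (θ a) v a t).hasDerivWithinAt)
    (HasDerivAt.continuousOn hθ)
    (HasDerivAt.continuousOn fun t _ => hasDerivAt_const_add_sub_smul (θ a) v a t) (by simp)

theorem fderiv_apply_eq_zero_of_comp_eventuallyEq_const {F : V → W} {θ : ℝ → V} {t₀ : ℝ}
    {w : V} {c : W} (hF : DifferentiableAt ℝ F (θ t₀)) (hθ : HasDerivAt θ w t₀)
    (hc : F ∘ θ =ᶠ[𝓝 t₀] fun _ => c) : fderiv ℝ F (θ t₀) w = 0 :=
  (hF.hasFDerivAt.comp_hasDerivAt t₀ hθ).unique ((hasDerivAt_const t₀ c).congr_of_eventuallyEq hc)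

variable {F : V → V}

theorem apply_eq_of_fderiv_apply_self_eq_zero {U : Set V} {θ : ℝ → V} {a b : ℝ}
    (hF : ∀ x ∈ U, DifferentiableAt ℝ F x) (hFF : ∀ x ∈ U, fderiv ℝ F x (F x) = 0)
    (hθ : ∀ t ∈ Icc a b, HasDerivAt θ (F (θ t)) t) (hθU : ∀ t ∈ Icc a b, θ t ∈ U) :
    ∀ t ∈ Icc a b, F (θ t) = F (θ a) := by
  have hFθ : ∀ t ∈ Icc a b, HasDerivAt (F ∘ θ) 0 t := fun t ht => by
    simpa [hFF _ (hθU t ht)] using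
      (hF _ (hθU t ht)).hasFDerivAt.comp_hasDerivAt t (hθ t ht)
  exact constant_of_has_deriv_right_zero (HasDerivAt.continuousOn hFθ) fun t ht =>
    (hFθ t (Ico_subset_Icc_self ht)).hasDerivWithinAt

theorem eq_add_sub_smul_of_fderiv_apply_self_eq_zero {U : Set V} {θ : ℝ → V} {a b : ℝ}
    (hF : ∀ x ∈ U, DifferentiableAt ℝ F x) (hFF : ∀ x ∈ U, fderiv ℝ F x (F x) = 0)
    (hθ : ∀ t ∈ Icc a b, HasDerivAt θ (F (θ t)) t) (hθU : ∀ t ∈ Icc a b, θ t ∈ U) :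
    ∀ t ∈ Icc a b, θ t = θ a + (t - a) • F (θ a) := by
  have hconst := apply_eq_of_fderiv_apply_self_eq_zero hF hFF hθ hθU
  exact eq_add_sub_smul_of_forall_hasDerivAt fun t ht => hconst t ht ▸ hθ t ht

theorem fderiv_apply_self_eq_zero_of_eventually_eq_add_sub_smul {θ : ℝ → V} {t₀ a : ℝ}
    {x v : V} (hF : DifferentiableAt ℝ F (θ t₀)) (hθ : ∀ᶠ t in 𝓝 t₀, HasDerivAt θ (F (θ t)) t)
    (hline : ∀ᶠ t in 𝓝 t₀, θ t = x + (t - a) • v) : fderiv ℝ F (θ t₀) (F (θ t₀)) = 0 := by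
  refine fderiv_apply_eq_zero_of_comp_eventuallyEq_const hF hθ.self_of_nhds (c := v) ?_
  filter_upwards [hθ, hline.eventually_nhds] with t hθt hline_t
  exact hθt.unique ((hasDerivAt_const_add_sub_smul x v a t).congr_of_eventuallyEq hline_t)

theorem exists_eventually_hasDerivAt_mem [CompleteSpace V] {U : Set V} {x₀ : V}
    (hF : ContDiffAt ℝ 1 F x₀) (hU : U ∈ 𝓝 x₀) :
    ∃ θ : ℝ → V, θ 0 = x₀ ∧ ∀ᶠ t in 𝓝 0, HasDerivAt θ (F (θ t)) t ∧ θ t ∈ U := by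
  obtain ⟨θ, hθ0, ε, hε, hθ⟩ := hF.exists_forall_mem_closedBall_exists_eq_forall_mem_Ioo_hasDerivAt₀ 0
  have hderiv : ∀ᶠ t in 𝓝 0, HasDerivAt θ (F (θ t)) t :=
    eventually_of_mem (Ioo_mem_nhds (by linarith) (by linarith)) hθ
  have hmem : ∀ᶠ t in 𝓝 0, θ t ∈ U :=
    hderiv.self_of_nhds.continuousAt.preimage_mem_nhds (hθ0 ▸ hU)
  exact ⟨θ, hθ0, hderiv.and hmem⟩

end IntegralCurve

/-- **Theorem 2.8.** Let `E : ℝⁿ → ℝ` be twice continuously differentiable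
with gradient `g` and Hessian `H` (the derivative of the gradient map), and let `U ⊆ ℝⁿ` be
an open set. Then `U` is a corridor for `E` if and only if `H(θ) g(θ) = 0` for every
`θ ∈ U`. -/
theorem isCorridor_iff_hessian_gradient_eq_zero {n : ℕ}
    (E : EuclideanSpace ℝ (Fin n) → ℝ) (hE : ContDiff ℝ 2 E)
    (U : Set (EuclideanSpace ℝ (Fin n))) (hU : IsOpen U) :
    IsCorridor E U ↔ ∀ θ ∈ U, fderiv ℝ (gradient E) θ (gradient E θ) = 0 := by
  have hF : ContDiff ℝ 1 (-gradient E) := (hE.gradient (by norm_num)).neg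
  have hdiff : Differentiable ℝ (-gradient E) := hF.differentiable one_ne_zero
  have hHess : ∀ x, fderiv ℝ (-gradient E) x ((-gradient E) x)
      = fderiv ℝ (gradient E) x (gradient E x) := fun x => by
    rw [fderiv_neg, neg_apply, Pi.neg_apply, map_neg, neg_neg]
  constructor
  · intro hcor x hx
    obtain ⟨θ, hθ0, hθ⟩ := exists_eventually_hasDerivAt_mem hF.contDiffAt (hU.mem_nhds hx)
    obtain ⟨ε, hε, hθε⟩ := (nhds_basis_Icc_pos (0 : ℝ)).eventually_iff.mp hθ
    rw [zero_sub, zero_add] at hθε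
    obtain ⟨v, hv⟩ := hcor (-ε) ε (by linarith) θ (fun t ht => (hθε ht).1) (fun t ht => (hθε ht).2)
    have hline : ∀ᶠ t in 𝓝 0, θ t = θ (-ε) + (t - -ε) • v :=
      eventually_of_mem (Icc_mem_nhds (by linarith) hε) hv
    rw [← hθ0, ← hHess]
    exact fderiv_apply_self_eq_zero_of_eventually_eq_add_sub_smul
      (hdiff _) (hθ.mono fun _ => And.left) hline
  · intro hHg a b _ θ hθ hθU
    exact ⟨_, eq_add_sub_smul_of_fderiv_apply_self_eq_zero (fun x _ => hdiff x)
      (fun x hx => (hHess x).trans (hHg x hx)) hθ hθU⟩
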